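/- For the tuned localizer L_λ^κ = σ₁⊗κ(A₁-λ₁) + σ₂⊗κ(A₂-λ₂) + σ₃⊗(A₃-λ₃), if L_λ^κ has an eigenvalue with absolute value ≤ μ, then there exists a unit vector v̂ with ‖(A₃-λ₃)v̂‖ ≤ (μ² + (κ²+2κ)δ)^{1/2} and ‖(Aᵢ-λᵢ)v̂‖ ≤ ((μ/κ)² + (1+2/κ)δ)^{1/2} for i = 1,2. -/

import Mathlib

open Matrix
open scoped Kronecker Matrix.Norms.L2Operator

noncomputable section

def pauli1 : Matrix (Fin 2) (Fin 2) ℂ := !![0, 1; 1, 0]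
def pauli2 : Matrix (Fin 2) (Fin 2) ℂ := !![0, -Complex.I; Complex.I, 0]
def pauli3 : Matrix (Fin 2) (Fin 2) ℂ := !![1, 0; 0, -1]


/-- The tuned spectral localizer with tuning parameter κ. -/
def tunedLocalizer {N : ℕ} (κ : ℝ) (A₁ A₂ A₃ : Matrix (Fin N) (Fin N) ℂ) (lam : Fin 3 → ℝ) :
    Matrix (Fin 2 × Fin N) (Fin 2 × Fin N) ℂ :=
  pauli1 ⊗ₖ ((κ : ℂ) • (A₁ - (lam 0 : ℂ) • 1)) + pauli2 ⊗ₖ ((κ : ℂ) • (A₂ - (lam 1 : ℂ) • 1))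
    + pauli3 ⊗ₖ (A₃ - (lam 2 : ℂ) • 1)

/-! Write `L = σ₁ ⊗ X + σ₂ ⊗ Y + σ₃ ⊗ Z` with the self-adjoint `X = κ (A₁ - λ₁)`,
`Y = κ (A₂ - λ₂)`, `Z = A₃ - λ₃`. The Pauli relations give
`L² = 1 ⊗ (X² + Y² + Z²) + i σ₃ ⊗ ⁅X, Y⁆ + i σ₂ ⊗ ⁅Z, X⁆ + i σ₁ ⊗ ⁅Y, Z⁆`, and the commutator part
has norm at most `(κ² + 2κ) δ`. Evaluating the quadratic form of `L²` at an eigenvector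
`u = (w₀, w₁)` with eigenvalue `c` gives
`Σₐ (‖X wₐ‖² + ‖Y wₐ‖² + ‖Z wₐ‖²) ≤ (c² + (κ² + 2κ) δ) (‖w₀‖² + ‖w₁‖²)`, so one of the halves
`wₐ ≠ 0` satisfies this inequality on its own; normalised, it is the vector sought. -/

open Complex
open scoped InnerProductSpace

theorem exists_ne_zero_le_of_add_le {α β : Type*} [Zero α] [AddCommMonoid β] [LinearOrder β]
    [IsOrderedCancelAddMonoid β] {f g : α → β} (h0 : g 0 ≤ f 0) {x y : α}
    (hxy : x ≠ 0 ∨ y ≠ 0) (h : f x + f y ≤ g x + g y) : ∃ z ≠ 0, f z ≤ g z := by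
  by_contra! hfg
  rcases eq_or_ne x 0 with rfl | hx
  · exact (add_lt_add_of_le_of_lt h0 (hfg y (hxy.resolve_left (not_not.2 rfl)))).not_ge h
  rcases eq_or_ne y 0 with rfl | hy
  · exact (add_lt_add_of_lt_of_le (hfg x hx) h0).not_ge h
  · exact (add_lt_add (hfg x hx) (hfg y hy)).not_ge h

theorem lie_sub_smul_one {R A : Type*} [CommRing R] [Ring A] [Algebra R A] (r s : R) (x y : A) :
    ⁅x - r • 1, y - s • 1⁆ = ⁅x, y⁆ := by
  simp only [Ring.lie_def, sub_mul, mul_sub, smul_mul_assoc, mul_smul_comm, one_mul, mul_one]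
  module

namespace ContinuousLinearMap

variable {E : Type*} [NormedAddCommGroup E] [InnerProductSpace ℂ E]

theorem norm_inner_apply_le (C : E →L[ℂ] E) (x y : E) : ‖⟪x, C y⟫_ℂ‖ ≤ ‖C‖ * ‖x‖ * ‖y‖ :=
  calc ‖⟪x, C y⟫_ℂ‖ ≤ ‖x‖ * ‖C y‖ := norm_inner_le_norm x (C y)
    _ ≤ ‖x‖ * (‖C‖ * ‖y‖) := by gcongr; exact C.le_opNorm y
    _ = ‖C‖ * ‖x‖ * ‖y‖ := by ring

theorem norm_apply_smul_inv_norm_sq (T : E →L[ℂ] E) (x : E) :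
    ‖T ((‖x‖⁻¹ : ℂ) • x)‖ ^ 2 = ‖T x‖ ^ 2 / ‖x‖ ^ 2 := by
  rw [map_smul, norm_smul, norm_inv, norm_real, norm_norm, mul_pow, inv_pow, inv_mul_eq_div]

end ContinuousLinearMap

section PauliSum

variable {E : Type*} [NormedAddCommGroup E] [InnerProductSpace ℂ E] {X Y Z : E →L[ℂ] E}

/-- `⟪u, (L² - 1 ⊗ (X² + Y² + Z²)) u⟫` for `u = (w₀, w₁)` and `L = σ₁ ⊗ X + σ₂ ⊗ Y + σ₃ ⊗ Z`. -/
def pauliCommutatorForm (X Y Z : E →L[ℂ] E) (w₀ w₁ : E) : ℝ :=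
  (⟪w₁, ⁅X, Y⁆ w₁⟫_ℂ).im - (⟪w₀, ⁅X, Y⁆ w₀⟫_ℂ).im + 2 * (⟪w₁, ⁅X, Z⁆ w₀⟫_ℂ).re
    - 2 * (⟪w₁, ⁅Y, Z⁆ w₀⟫_ℂ).im

theorem abs_pauliCommutatorForm_le (w₀ w₁ : E) :
    |pauliCommutatorForm X Y Z w₀ w₁| ≤
      (‖⁅X, Y⁆‖ + ‖⁅X, Z⁆‖ + ‖⁅Y, Z⁆‖) * (‖w₀‖ ^ 2 + ‖w₁‖ ^ 2) := by
  have h₁ := (abs_im_le_norm _).trans (⁅X, Y⁆.norm_inner_apply_le w₁ w₁)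
  have h₀ := (abs_im_le_norm _).trans (⁅X, Y⁆.norm_inner_apply_le w₀ w₀)
  have hXZ := (abs_re_le_norm _).trans (⁅X, Z⁆.norm_inner_apply_le w₁ w₀)
  have hYZ := (abs_im_le_norm _).trans (⁅Y, Z⁆.norm_inner_apply_le w₁ w₀)
  have hamgm : 2 * (‖w₁‖ * ‖w₀‖) ≤ ‖w₀‖ ^ 2 + ‖w₁‖ ^ 2 := by
    nlinarith [sq_nonneg (‖w₀‖ - ‖w₁‖)]
  have := norm_nonneg ⁅X, Z⁆
  have := norm_nonneg ⁅Y, Z⁆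
  rw [pauliCommutatorForm, abs_le] at *
  constructor <;> nlinarith

variable [CompleteSpace E]

theorem IsSelfAdjoint.inner_lie_apply (hX : IsSelfAdjoint X) (hY : IsSelfAdjoint Y) (x y : E) :
    ⟪x, ⁅X, Y⁆ y⟫_ℂ = ⟪X x, Y y⟫_ℂ - ⟪Y x, X y⟫_ℂ := by
  rw [Ring.lie_def, _root_.sub_apply, inner_sub_right]
  exact congrArg₂ _ (hX.isSymmetric x (Y y)).symm (hY.isSymmetric x (X y)).symm

theorem pauli_norm_sq_add_norm_sq (hX : IsSelfAdjoint X) (hY : IsSelfAdjoint Y)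
    (hZ : IsSelfAdjoint Z) (w₀ w₁ : E) :
    ‖X w₁ - I • Y w₁ + Z w₀‖ ^ 2 + ‖X w₀ + I • Y w₀ - Z w₁‖ ^ 2 =
      (‖X w₀‖ ^ 2 + ‖Y w₀‖ ^ 2 + ‖Z w₀‖ ^ 2) + (‖X w₁‖ ^ 2 + ‖Y w₁‖ ^ 2 + ‖Z w₁‖ ^ 2)
        + pauliCommutatorForm X Y Z w₀ w₁ := by
  simp only [pauliCommutatorForm, hX.inner_lie_apply hY, hX.inner_lie_apply hZ,
    hY.inner_lie_apply hZ, ← inner_self_eq_norm_sq (𝕜 := ℂ), inner_add_left, inner_add_right,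
    inner_sub_left, inner_sub_right, inner_smul_left, inner_smul_right, RCLike.re_to_complex]
  -- with every inner product written through `⟪X ·, Y ·⟫`, `⟪X ·, Z ·⟫`, `⟪Y ·, Z ·⟫`, the identity
  -- is polynomial in their real and imaginary parts
  rw [← inner_conj_symm (Y w₁) (X w₁), ← inner_conj_symm (Y w₀) (X w₀),
    ← inner_conj_symm (Z w₀) (X w₁), ← inner_conj_symm (Z w₁) (X w₀),
    ← inner_conj_symm (Z w₀) (Y w₁), ← inner_conj_symm (Z w₁) (Y w₀)]
  simp only [add_re, sub_re, add_im, sub_im, mul_re, mul_im, conj_re, conj_im, I_re, I_im]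
  ring

theorem pauli_sum_norm_sq_le_of_eq_smul (hX : IsSelfAdjoint X) (hY : IsSelfAdjoint Y)
    (hZ : IsSelfAdjoint Z) {w₀ w₁ : E} {c : ℝ} (h₀ : X w₁ - I • Y w₁ + Z w₀ = (c : ℂ) • w₀)
    (h₁ : X w₀ + I • Y w₀ - Z w₁ = (c : ℂ) • w₁) :
    (‖X w₀‖ ^ 2 + ‖Y w₀‖ ^ 2 + ‖Z w₀‖ ^ 2) + (‖X w₁‖ ^ 2 + ‖Y w₁‖ ^ 2 + ‖Z w₁‖ ^ 2) ≤
      (c ^ 2 + ‖⁅X, Y⁆‖ + ‖⁅X, Z⁆‖ + ‖⁅Y, Z⁆‖) * ‖w₀‖ ^ 2 +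
        (c ^ 2 + ‖⁅X, Y⁆‖ + ‖⁅X, Z⁆‖ + ‖⁅Y, Z⁆‖) * ‖w₁‖ ^ 2 := by
  have hid := pauli_norm_sq_add_norm_sq hX hY hZ w₀ w₁
  rw [h₀, h₁, norm_smul, norm_smul, norm_real, Real.norm_eq_abs, mul_pow, mul_pow, sq_abs] at hid
  linarith [(abs_le.1 (abs_pauliCommutatorForm_le (X := X) (Y := Y) (Z := Z) w₀ w₁)).1]

theorem exists_norm_eq_one_pauli_sum_norm_sq_le (hX : IsSelfAdjoint X) (hY : IsSelfAdjoint Y)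
    (hZ : IsSelfAdjoint Z) {w₀ w₁ : E} (hw : w₀ ≠ 0 ∨ w₁ ≠ 0) {c : ℝ}
    (h₀ : X w₁ - I • Y w₁ + Z w₀ = (c : ℂ) • w₀) (h₁ : X w₀ + I • Y w₀ - Z w₁ = (c : ℂ) • w₁) :
    ∃ v : E, ‖v‖ = 1 ∧
      ‖X v‖ ^ 2 + ‖Y v‖ ^ 2 + ‖Z v‖ ^ 2 ≤ c ^ 2 + ‖⁅X, Y⁆‖ + ‖⁅X, Z⁆‖ + ‖⁅Y, Z⁆‖ := by
  obtain ⟨w, hw, hQ⟩ := exists_ne_zero_le_of_add_le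
    (f := fun w => ‖X w‖ ^ 2 + ‖Y w‖ ^ 2 + ‖Z w‖ ^ 2)
    (g := fun w => (c ^ 2 + ‖⁅X, Y⁆‖ + ‖⁅X, Z⁆‖ + ‖⁅Y, Z⁆‖) * ‖w‖ ^ 2) (by simp) hw
    (pauli_sum_norm_sq_le_of_eq_smul hX hY hZ h₀ h₁)
  refine ⟨(‖w‖⁻¹ : ℂ) • w, norm_smul_inv_norm hw, ?_⟩
  have hw2 : 0 < ‖w‖ ^ 2 := by positivity
  simp only [ContinuousLinearMap.norm_apply_smul_inv_norm_sq, ← add_div, div_le_iff₀ hw2]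
  exact hQ

theorem exists_norm_eq_one_tuned_bounds {T₁ T₂ T₃ : E →L[ℂ] E} (hT₁ : IsSelfAdjoint T₁)
    (hT₂ : IsSelfAdjoint T₂) (hT₃ : IsSelfAdjoint T₃) {δ κ μ c : ℝ} (h₁₂ : ‖⁅T₁, T₂⁆‖ ≤ δ)
    (h₁₃ : ‖⁅T₁, T₃⁆‖ ≤ δ) (h₂₃ : ‖⁅T₂, T₃⁆‖ ≤ δ) (hκ : 0 < κ) (hc : |c| ≤ μ) {w₀ w₁ : E}
    (hw : w₀ ≠ 0 ∨ w₁ ≠ 0)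
    (h₀ : ((κ : ℂ) • T₁) w₁ - I • ((κ : ℂ) • T₂) w₁ + T₃ w₀ = (c : ℂ) • w₀)
    (h₁ : ((κ : ℂ) • T₁) w₀ + I • ((κ : ℂ) • T₂) w₀ - T₃ w₁ = (c : ℂ) • w₁) :
    ∃ v : E, ‖v‖ = 1 ∧ ‖T₃ v‖ ≤ √(μ ^ 2 + (κ ^ 2 + 2 * κ) * δ) ∧
      ‖T₁ v‖ ≤ √((μ / κ) ^ 2 + (1 + 2 / κ) * δ) ∧ ‖T₂ v‖ ≤ √((μ / κ) ^ 2 + (1 + 2 / κ) * δ) := by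
  have hκT₁ : IsSelfAdjoint ((κ : ℂ) • T₁) := IsSelfAdjoint.smul (conj_ofReal κ) hT₁
  have hκT₂ : IsSelfAdjoint ((κ : ℂ) • T₂) := IsSelfAdjoint.smul (conj_ofReal κ) hT₂
  obtain ⟨v, hv, hQ⟩ := exists_norm_eq_one_pauli_sum_norm_sq_le hκT₁ hκT₂ hT₃ hw h₀ h₁
  simp only [_root_.smul_apply, Ring.lie_def, smul_mul_assoc, mul_smul_comm, ← smul_sub,
    norm_smul, norm_real, Real.norm_eq_abs, abs_of_pos hκ] at hQ h₁₂ h₁₃ h₂₃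
  have hc2 : c ^ 2 ≤ μ ^ 2 := sq_le_sq' (abs_le.1 hc).1 (abs_le.1 hc).2
  have hQ' : κ ^ 2 * (‖T₁ v‖ ^ 2 + ‖T₂ v‖ ^ 2) + ‖T₃ v‖ ^ 2 ≤ μ ^ 2 + (κ ^ 2 + 2 * κ) * δ := by
    nlinarith [mul_le_mul_of_nonneg_left h₁₂ (mul_pos hκ hκ).le,
      mul_le_mul_of_nonneg_left h₁₃ hκ.le, mul_le_mul_of_nonneg_left h₂₃ hκ.le]
  have hscale : (μ / κ) ^ 2 + (1 + 2 / κ) * δ = (μ ^ 2 + (κ ^ 2 + 2 * κ) * δ) / κ ^ 2 := by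
    field_simp
  refine ⟨v, hv, Real.le_sqrt_of_sq_le ?_, Real.le_sqrt_of_sq_le ?_, Real.le_sqrt_of_sq_le ?_⟩
  · nlinarith [sq_nonneg ‖T₁ v‖, sq_nonneg ‖T₂ v‖]
  all_goals
    rw [hscale, le_div_iff₀ (by positivity)]
    nlinarith [sq_nonneg ‖T₁ v‖, sq_nonneg ‖T₂ v‖, sq_nonneg ‖T₃ v‖]

end PauliSum

theorem Matrix.kronecker_mulVec_apply {R l m n p : Type*} [CommSemiring R] [Fintype m]
    [Fintype p] (P : Matrix l m R) (M : Matrix n p R) (u : m × p → R) (a : l) (j : n) :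
    ((P ⊗ₖ M) *ᵥ u) (a, j) = ∑ b, P a b * (M *ᵥ Function.curry u b) j := by
  simp only [mulVec, dotProduct, Fintype.sum_prod_type, kroneckerMap_apply, Finset.mul_sum,
    Function.curry_apply, mul_assoc]

theorem exists_pauli_block_of_kronecker_mulVec_eq_smul {n : Type*} [Fintype n] [DecidableEq n]
    {M₁ M₂ M₃ : Matrix n n ℂ} {u : Fin 2 × n → ℂ} (hu : u ≠ 0) {c : ℂ}
    (h : (pauli1 ⊗ₖ M₁ + pauli2 ⊗ₖ M₂ + pauli3 ⊗ₖ M₃) *ᵥ u = c • u) :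
    ∃ w₀ w₁ : EuclideanSpace ℂ n, (w₀ ≠ 0 ∨ w₁ ≠ 0) ∧
      toEuclideanCLM (𝕜 := ℂ) M₁ w₁ - I • toEuclideanCLM (𝕜 := ℂ) M₂ w₁
        + toEuclideanCLM (𝕜 := ℂ) M₃ w₀ = c • w₀ ∧
      toEuclideanCLM (𝕜 := ℂ) M₁ w₀ + I • toEuclideanCLM (𝕜 := ℂ) M₂ w₀
        - toEuclideanCLM (𝕜 := ℂ) M₃ w₁ = c • w₁ := by
  refine ⟨WithLp.toLp 2 (Function.curry u 0), WithLp.toLp 2 (Function.curry u 1), ?_, ?_, ?_⟩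
  · contrapose! hu
    funext ⟨a, j⟩
    fin_cases a
    · exact congrFun (congrArg WithLp.ofLp hu.1) j
    · exact congrFun (congrArg WithLp.ofLp hu.2) j
  all_goals
    simp only [toEuclideanCLM_toLp, ← WithLp.toLp_smul, ← WithLp.toLp_add, ← WithLp.toLp_sub]
    congr 1
    funext j
  · have := congrFun h (0, j)
    simp only [pauli1, pauli2, pauli3, add_mulVec, Pi.add_apply, kronecker_mulVec_apply,
      of_apply, cons_val', cons_val_fin_one, cons_val_zero, cons_val_one, Fin.sum_univ_two,
      zero_mul, one_mul, zero_add, add_zero, neg_mul, Pi.smul_apply, smul_eq_mul, Pi.sub_apply,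
      Function.curry_apply] at this ⊢
    linear_combination this
  · have := congrFun h (1, j)
    simp only [pauli1, pauli2, pauli3, add_mulVec, Pi.add_apply, kronecker_mulVec_apply,
      of_apply, cons_val', cons_val_fin_one, cons_val_zero, cons_val_one, Fin.sum_univ_two,
      zero_mul, one_mul, zero_add, add_zero, neg_mul, Pi.smul_apply, smul_eq_mul, Pi.sub_apply,
      Function.curry_apply] at this ⊢
    linear_combination this

theorem Matrix.IsHermitian.isSelfAdjoint_toEuclideanCLM_sub_smul_one {n : Type*} [Fintype n]
    [DecidableEq n] {A : Matrix n n ℂ} (hA : A.IsHermitian) (r : ℝ) :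
    IsSelfAdjoint (toEuclideanCLM (𝕜 := ℂ) (A - (r : ℂ) • 1)) :=
  IsSelfAdjoint.map (hA.sub (IsSelfAdjoint.smul (conj_ofReal r) (IsSelfAdjoint.one _))) _

theorem Matrix.norm_lie_toEuclideanCLM_sub_smul_one {n : Type*} [Fintype n] [DecidableEq n]
    (M M' : Matrix n n ℂ) (r s : ℝ) :
    ‖⁅toEuclideanCLM (n := n) (𝕜 := ℂ) (M - (r : ℂ) • 1),
      toEuclideanCLM (n := n) (𝕜 := ℂ) (M' - (s : ℂ) • 1)⁆‖ =
      ‖⁅M, M'⁆‖ := by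
  rw [← lie_sub_smul_one (r : ℂ) (s : ℂ) M M', cstar_norm_def, Ring.lie_def, Ring.lie_def,
    ← map_mul, ← map_mul, ← map_sub]

theorem tuned_localizer_approx_eigenvector_general {N : ℕ}
    (A : Fin 3 → Matrix (Fin N) (Fin N) ℂ) (hA : ∀ j, (A j).IsHermitian)
    (δ : ℝ) (hδ : ∀ i j, ‖⁅A i, A j⁆‖ ≤ δ)
    (κ : ℝ) (hκ : 0 < κ) (μ : ℝ) (lam : Fin 3 → ℝ)
    (hpseudo : ∃ (c : ℝ), |c| ≤ μ ∧ ∃ u : Fin 2 × Fin N → ℂ, u ≠ 0 ∧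
      (tunedLocalizer κ (A 0) (A 1) (A 2) lam).mulVec u = (c : ℂ) • u) :
    ∃ v : EuclideanSpace ℂ (Fin N), ‖v‖ = 1 ∧
      ‖((WithLp.equiv 2 (Fin N → ℂ)).symm
          ((A 2 - (lam 2 : ℂ) • 1).mulVec v))‖ ≤ (μ ^ 2 + (κ ^ 2 + 2 * κ) * δ) ^ ((1 : ℝ)/2) ∧
      ∀ i, i ≠ 2 →
        ‖((WithLp.equiv 2 (Fin N → ℂ)).symm
          ((A i - (lam i : ℂ) • 1).mulVec v))‖ ≤ ((μ / κ) ^ 2 + (1 + 2 / κ) * δ) ^ ((1 : ℝ)/2) := by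
  obtain ⟨c, hc, u, hu, heig⟩ := hpseudo
  obtain ⟨w₀, w₁, hw, h₀, h₁⟩ := exists_pauli_block_of_kronecker_mulVec_eq_smul hu heig
  rw [map_smul, map_smul] at h₀ h₁
  have hT i := (hA i).isSelfAdjoint_toEuclideanCLM_sub_smul_one (lam i)
  have hTT i j :=
    (norm_lie_toEuclideanCLM_sub_smul_one (A i) (A j) (lam i) (lam j)).trans_le (hδ i j)
  obtain ⟨v, hv, hv₂, hv₀, hv₁⟩ := exists_norm_eq_one_tuned_bounds (hT 0) (hT 1) (hT 2)
    (hTT 0 1) (hTT 0 2) (hTT 1 2) hκ hc hw h₀ h₁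
  simp only [← Real.sqrt_eq_rpow]
  refine ⟨v, hv, hv₂, fun i hi => ?_⟩
  fin_cases i
  · exact hv₀
  · exact hv₁
  · exact absurd rfl hi

theorem tuned_localizer_approx_eigenvector {N : ℕ}
    (A : Fin 3 → Matrix (Fin N) (Fin N) ℂ) (hA : ∀ j, (A j).IsHermitian)
    (δ : ℝ) (hδpos : 0 < δ) (hδ : ∀ i j, ‖⁅A i, A j⁆‖ ≤ δ)
    (κ : ℝ) (hκ : 0 < κ) (μ : ℝ) (hμ : 0 ≤ μ) (lam : Fin 3 → ℝ)
    (hpseudo : ∃ (c : ℝ), |c| ≤ μ ∧ ∃ u : Fin 2 × Fin N → ℂ, u ≠ 0 ∧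
      (tunedLocalizer κ (A 0) (A 1) (A 2) lam).mulVec u = (c : ℂ) • u) :
    ∃ v : EuclideanSpace ℂ (Fin N), ‖v‖ = 1 ∧
      ‖((WithLp.equiv 2 (Fin N → ℂ)).symm
          ((A 2 - (lam 2 : ℂ) • 1).mulVec v))‖ ≤ (μ ^ 2 + (κ ^ 2 + 2 * κ) * δ) ^ ((1 : ℝ)/2) ∧
      ∀ i, i ≠ 2 →
        ‖((WithLp.equiv 2 (Fin N → ℂ)).symm
          ((A i - (lam i : ℂ) • 1).mulVec v))‖ ≤ ((μ / κ) ^ 2 + (1 + 2 / κ) * δ) ^ ((1 : ℝ)/2) :=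
  tuned_localizer_approx_eigenvector_general A hA δ hδ κ hκ μ lam hpseudo
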